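/- Let f : ℝ^{n×r} → ℝ be continuously differentiable with L-Lipschitz gradient and h : ℝ^{n×r} → ℝ convex and L_h-Lipschitz; set F := f + h. Let 0 < κ₁ ≤ κ₂, σ ∈ (0,1), c₀ > 0, M₁ > 0, and let m be a nonnegative integer. Suppose sequences X_k ∈ St(n,r), V_k ∈ T_{X_k}, α_k ∈ [c₀,1], and linear maps B_k : ℝ^{n×r} → ℝ^{n×r}, self-adjoint for the trace inner product and mapping T_{X_k} into itself, satisfy for all k: (i) κ₁‖V‖² ≤ ⟨V, B_k V⟩ ≤ κ₂‖V‖² for all V ∈ T_{X_k}; (ii) V_k minimizes φ_k(V) := ⟨∇f(X_k),V⟩ + (1/2)⟨V, B_k V⟩ + h(X_k+V) over T_{X_k}; (iii) ‖X_{k+1} − X_k‖ ≤ M₁ α_k ‖V_k‖; (iv) F(X_{k+1}) ≤ max_{max(k−m,0) ≤ j ≤ k} F(X_j) − (σ/2) α_k ⟨V_k, B_k V_k⟩. Then every accumulation point X* of the sequence (X_k) is a stationary point of the problem of minimizing F over St(n,r): there exists ξ ∈ ∂h(X*) such that P_{X*}(∇f(X*) + ξ) = 0. -/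

import Mathlib

open Matrix Filter

/-- The trace inner product `⟨A, B⟩ = tr(AᵀB)` on `ℝ^{n×r}`. -/
noncomputable def tinner {n r : ℕ} (A B : Matrix (Fin n) (Fin r) ℝ) : ℝ := (Aᵀ * B).trace

/-- `V` belongs to the tangent space `T_X = {V : VᵀX + XᵀV = 0}` of the Stiefel manifold at `X`. -/
def IsTangent {n r : ℕ} (X V : Matrix (Fin n) (Fin r) ℝ) : Prop := Vᵀ * X + Xᵀ * V = 0

/-- The orthogonal projection `P_X Z = Z - (1/2) X (XᵀZ + ZᵀX)` onto `T_X`. -/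
noncomputable def projT {n r : ℕ} (X Z : Matrix (Fin n) (Fin r) ℝ) : Matrix (Fin n) (Fin r) ℝ :=
  Z - (1 / 2 : ℝ) • (X * (Xᵀ * Z + Zᵀ * X))

-- The norm `‖·‖` (and the topology) below come from the Frobenius norm,
-- associated to the trace inner product.
attribute [local instance] Matrix.frobeniusNormedAddCommGroup Matrix.frobeniusNormedSpace

/-!
The nonmonotone sufficient decrease (iv), with `α_k ≥ c₀` and `κ₁ > 0`, gives
`F(X_{k+1}) ≤ max_{k-m ≤ j ≤ k} F(X_j) - c ‖V_k‖²`. The window maxima therefore decrease to a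
limit, and the Grippo–Lampariello–Lucidi induction on the lag behind the index where each
maximum is attained (using (iii) and the uniform continuity of `F` on the compact Stiefel
manifold) shows `V_k → 0`; then also `B_k V_k → 0`, since `‖B_k V‖ ≤ κ₂ ‖V‖` on `T_{X_k}`.

Along a subsequence `X_k → X*`, the first-order condition of the subproblem (ii),
`0 ≤ ⟨∇f(X_k) + B_k V_k, W - V_k⟩ + h(X_k + W) - h(X_k + V_k)` for `W ∈ T_{X_k}`, passes to the
limit with `W = P_{X_k} W'`, giving `h(X*) ≤ h(X* + W') + ⟨∇f(X*), W'⟩` for `W' ∈ T_{X*}`.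
By Hahn–Banach, dominated by the directional derivative of `h` at `X*`, the functional
`-⟨∇f(X*), ·⟩` on `T_{X*}` extends to a subgradient `ξ` of `h` at `X*`; then `∇f(X*) + ξ` is
orthogonal to `T_{X*}`, i.e. `P_{X*}(∇f(X*) + ξ) = 0`.
-/

open Set Topology

section NonmonotoneDescent

def windowMax (a : ℕ → ℝ) (m k : ℕ) : ℝ :=
  (Finset.Icc (k - m) k).sup' (Finset.nonempty_Icc.mpr (Nat.sub_le k m)) a

lemma le_windowMax (a : ℕ → ℝ) (m k : ℕ) : a k ≤ windowMax a m k :=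
  Finset.le_sup' a (Finset.mem_Icc.mpr ⟨Nat.sub_le k m, le_rfl⟩)

lemma exists_windowMax_eq (a : ℕ → ℝ) (m k : ℕ) :
    ∃ i, k - m ≤ i ∧ i ≤ k ∧ windowMax a m k = a i := by
  obtain ⟨i, hi, he⟩ := Finset.exists_mem_eq_sup' (Finset.nonempty_Icc.mpr (Nat.sub_le k m)) a
  exact ⟨i, (Finset.mem_Icc.mp hi).1, (Finset.mem_Icc.mp hi).2, he⟩

lemma antitone_windowMax {a : ℕ → ℝ} {m : ℕ} (h : ∀ k, a (k + 1) ≤ windowMax a m k) :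
    Antitone (windowMax a m) := by
  refine antitone_nat_of_succ_le fun k => Finset.sup'_le _ _ fun j hj => ?_
  obtain ⟨hj₁, hj₂⟩ := Finset.mem_Icc.mp hj
  rcases Nat.lt_or_ge j (k + 1) with hjk | hjk
  · exact Finset.le_sup' a (Finset.mem_Icc.mpr ⟨by omega, by omega⟩)
  · obtain rfl : j = k + 1 := by omega
    exact h k

lemma UniformContinuousOn.tendsto_dist_comp {α β ι : Type*} [PseudoMetricSpace α]
    [PseudoMetricSpace β] {f : α → β} {s : Set α} {l : Filter ι} (hf : UniformContinuousOn f s)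
    {x y : ι → α} (hx : ∀ i, x i ∈ s) (hy : ∀ i, y i ∈ s)
    (hxy : Tendsto (fun i => dist (x i) (y i)) l (𝓝 0)) :
    Tendsto (fun i => dist (f (x i)) (f (y i))) l (𝓝 0) := by
  have hpair := (tendsto_uniformity_iff_dist_tendsto_zero (f := fun i => (x i, y i))).2 hxy
  refine (tendsto_uniformity_iff_dist_tendsto_zero (f := fun i => (f (x i), f (y i)))).1 ?_
  exact Tendsto.comp hf <| tendsto_inf.2
    ⟨hpair, tendsto_principal.2 (.of_forall fun i => mk_mem_prod (hx i) (hy i))⟩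

variable {W : Type*} [SeminormedAddCommGroup W]

lemma tendsto_zero_of_descent_along {a M : ℕ → ℝ} {V : ℕ → W} {c μ : ℝ} (hc : 0 < c)
    (hdec : ∀ k, a (k + 1) ≤ M k - c * ‖V k‖ ^ 2) {i : ℕ → ℕ}
    (hM : Tendsto (fun k => M (i k)) atTop (𝓝 μ))
    (ha : Tendsto (fun k => a (i k + 1)) atTop (𝓝 μ)) :
    Tendsto (fun k => V (i k)) atTop (𝓝 0) := by
  have hsq : Tendsto (fun k => ‖V (i k)‖ ^ 2) atTop (𝓝 0) := by
    refine squeeze_zero (fun k => by positivity) (fun k => ?_)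
      (by simpa using (hM.sub ha).div_const c)
    rw [le_div_iff₀ hc]
    linarith [hdec (i k)]
  refine tendsto_zero_iff_norm_tendsto_zero.2 ?_
  simpa [Real.sqrt_sq (norm_nonneg _)] using hsq.sqrt

lemma tendsto_zero_of_tendsto_lags {V : ℕ → W} {ℓ : ℕ → ℕ} {m : ℕ} (hℓm : ∀ k, k - m ≤ ℓ k)
    (hℓk : ∀ k, ℓ k ≤ k) (hV : ∀ j, Tendsto (fun k => V (ℓ k - (j + 1))) atTop (𝓝 0)) :
    Tendsto V atTop (𝓝 0) := by
  have hbound (k : ℕ) :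
      ‖V k‖ ≤ ∑ j ∈ Finset.range (m + 1), ‖V (ℓ (k + (m + 1)) - (j + 1))‖ := by
    have hℓ₁ := hℓm (k + (m + 1))
    have hℓ₂ := hℓk (k + (m + 1))
    calc ‖V k‖ = ‖V (ℓ (k + (m + 1)) - (ℓ (k + (m + 1)) - (k + 1) + 1))‖ := by
          congr 2; omega
      _ ≤ _ := Finset.single_le_sum (f := fun j => ‖V (ℓ (k + (m + 1)) - (j + 1))‖)
          (fun j _ => norm_nonneg _) (Finset.mem_range.2 (by omega))
  refine squeeze_zero_norm hbound ?_
  simpa using tendsto_finsetSum (Finset.range (m + 1))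
    fun j _ => (hV j).norm.comp (tendsto_add_atTop_nat (m + 1))

/-- The Grippo–Lampariello–Lucidi argument for nonmonotone line searches. -/
theorem tendsto_zero_of_nonmonotone_descent {E : Type*} [PseudoMetricSpace E] {K : Set E}
    (hK : IsCompact K) {F : E → ℝ} (hF : ContinuousOn F K) {X : ℕ → E} (hXK : ∀ k, X k ∈ K)
    {V : ℕ → W} {m : ℕ} {c C : ℝ} (hc : 0 < c)
    (hdec : ∀ k, F (X (k + 1)) ≤ windowMax (F ∘ X) m k - c * ‖V k‖ ^ 2)
    (hstep : ∀ k, dist (X (k + 1)) (X k) ≤ C * ‖V k‖) :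
    Tendsto V atTop (𝓝 0) := by
  set M := windowMax (F ∘ X) m
  have hM : Tendsto M atTop (𝓝 (⨅ k, M k)) := by
    refine tendsto_atTop_ciInf (antitone_windowMax fun k => ?_) ?_
    · show F (X (k + 1)) ≤ M k
      nlinarith [hdec k, sq_nonneg ‖V k‖]
    · obtain ⟨b, hb⟩ := hK.bddBelow_image hF
      exact ⟨b, forall_mem_range.2 fun k =>
        (hb ⟨X k, hXK k, rfl⟩).trans (le_windowMax (F ∘ X) m k)⟩
  choose ℓ hℓm hℓk hℓ using exists_windowMax_eq (F ∘ X) m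
  have hℓ_tendsto : Tendsto ℓ atTop atTop := tendsto_atTop_mono hℓm (tendsto_sub_atTop_nat m)
  have hlag_tendsto (j : ℕ) : Tendsto (fun k => ℓ k - (j + 1)) atTop atTop :=
    (tendsto_sub_atTop_nat _).comp hℓ_tendsto
  have hlag_succ (j : ℕ) : ∀ᶠ k in atTop, ℓ k - (j + 1) + 1 = ℓ k - j :=
    (hℓ_tendsto.eventually_ge_atTop (j + 1)).mono fun k hk => by omega
  have hV_lag {j : ℕ} (hj : Tendsto (fun k => F (X (ℓ k - j))) atTop (𝓝 (⨅ k, M k))) :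
      Tendsto (fun k => V (ℓ k - (j + 1))) atTop (𝓝 0) :=
    tendsto_zero_of_descent_along (a := F ∘ X) hc hdec (hM.comp (hlag_tendsto j))
      (hj.congr' ((hlag_succ j).mono fun k hk => by simp only [Function.comp_apply, hk]))
  -- induction on the lag `j` behind the index `ℓ k` at which the window maximum is attained
  have hF_lag (j : ℕ) : Tendsto (fun k => F (X (ℓ k - j))) atTop (𝓝 (⨅ k, M k)) := by
    induction j with
    | zero => exact hM.congr hℓ
    | succ j ih =>
      have hdist : Tendsto (fun k => dist (X (ℓ k - j)) (X (ℓ k - (j + 1)))) atTop (𝓝 0) := by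
        refine squeeze_zero' (.of_forall fun k => dist_nonneg) ((hlag_succ j).mono fun k hk => ?_)
          (by simpa using (hV_lag ih).norm.const_mul C)
        rw [← hk]
        exact hstep _
      exact ih.congr_dist ((hK.uniformContinuousOn_of_continuous hF).tendsto_dist_comp
        (fun k => hXK _) (fun k => hXK _) hdist)
  exact tendsto_zero_of_tendsto_lags hℓm hℓk fun j => hV_lag (hF_lag j)

end NonmonotoneDescent

section DirectionalDerivative

variable {E : Type*} [AddCommGroup E] [Module ℝ E] {h : E → ℝ}

noncomputable def dirDeriv (h : E → ℝ) (x v : E) : ℝ :=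
  sInf (slope (fun t : ℝ => h (x + t • v)) 0 '' Ioi 0)

lemma slope_line_apply (h : E → ℝ) (x v : E) (t : ℝ) :
    slope (fun t : ℝ => h (x + t • v)) 0 t = (h (x + t • v) - h x) / t := by
  simp [slope_def_field]

lemma ConvexOn.comp_line (hh : ConvexOn ℝ univ h) (x v : E) :
    ConvexOn ℝ univ fun t : ℝ => h (x + t • v) := by
  refine ⟨convex_univ, fun s _ t _ a b ha hb hab => ?_⟩
  have hpt : a • (x + s • v) + b • (x + t • v) = x + (a • s + b • t) • v := by
    match_scalars
    · linear_combination hab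
    · ring
  simpa only [hpt] using hh.2 (mem_univ (x + s • v)) (mem_univ (x + t • v)) ha hb hab

lemma ConvexOn.monotoneOn_slope_line (hh : ConvexOn ℝ univ h) (x v : E) :
    MonotoneOn (slope (fun t : ℝ => h (x + t • v)) 0) ({0}ᶜ) := by
  simpa [compl_eq_univ_sdiff] using (hh.comp_line x v).slope_mono (mem_univ 0)

lemma ConvexOn.bddBelow_slope_line (hh : ConvexOn ℝ univ h) (x v : E) :
    BddBelow (slope (fun t : ℝ => h (x + t • v)) 0 '' Ioi 0) := by
  refine ⟨slope (fun t : ℝ => h (x + t • v)) 0 (-1), forall_mem_image.2 fun t ht => ?_⟩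
  exact hh.monotoneOn_slope_line x v (by norm_num) (ne_of_gt ht) (by linarith [mem_Ioi.1 ht])

lemma ConvexOn.tendsto_slope_dirDeriv (hh : ConvexOn ℝ univ h) (x v : E) :
    Tendsto (slope (fun t : ℝ => h (x + t • v)) 0) (𝓝[>] 0) (𝓝 (dirDeriv h x v)) :=
  ((hh.monotoneOn_slope_line x v).mono fun _ ht => ne_of_gt ht).tendsto_nhdsGT
    (hh.bddBelow_slope_line x v)

lemma ConvexOn.dirDeriv_le_slope (hh : ConvexOn ℝ univ h) (x v : E) {t : ℝ} (ht : 0 < t) :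
    dirDeriv h x v ≤ (h (x + t • v) - h x) / t := by
  rw [← slope_line_apply]
  exact csInf_le (hh.bddBelow_slope_line x v) (mem_image_of_mem _ ht)

lemma ConvexOn.dirDeriv_sub_le (hh : ConvexOn ℝ univ h) (x z : E) :
    dirDeriv h x (z - x) ≤ h z - h x := by
  simpa using hh.dirDeriv_le_slope x (z - x) one_pos

lemma le_dirDeriv {x v : E} {a : ℝ} (ha : ∀ t : ℝ, 0 < t → h x + t * a ≤ h (x + t • v)) :
    a ≤ dirDeriv h x v := by
  refine le_csInf ⟨_, mem_image_of_mem _ (mem_Ioi.2 one_pos)⟩ (forall_mem_image.2 fun t ht => ?_)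
  rw [slope_line_apply, le_div_iff₀ ht]
  linarith [ha t ht]

lemma ConvexOn.dirDeriv_smul (hh : ConvexOn ℝ univ h) (x v : E) {c : ℝ} (hc : 0 < c) :
    dirDeriv h x (c • v) = c * dirDeriv h x v := by
  have hc' : Tendsto (c * ·) (𝓝[>] (0 : ℝ)) (𝓝[>] 0) :=
    tendsto_iff_comap.2 (comap_mulLeft_nhdsGT_zero hc).ge
  refine tendsto_nhds_unique (hh.tendsto_slope_dirDeriv x (c • v)) ?_
  refine (((hh.tendsto_slope_dirDeriv x v).comp hc').const_mul c).congr' ?_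
  filter_upwards [self_mem_nhdsWithin] with t ht
  rw [Function.comp_apply, slope_line_apply, slope_line_apply, smul_smul, mul_comm t c]
  field_simp [ne_of_gt hc, ne_of_gt (mem_Ioi.1 ht)]

lemma ConvexOn.dirDeriv_add_le (hh : ConvexOn ℝ univ h) (x v w : E) :
    dirDeriv h x (v + w) ≤ dirDeriv h x v + dirDeriv h x w := by
  have h2 : Tendsto (2 * ·) (𝓝[>] (0 : ℝ)) (𝓝[>] 0) :=
    tendsto_iff_comap.2 (comap_mulLeft_nhdsGT_zero two_pos).ge
  refine le_of_tendsto_of_tendsto (hh.tendsto_slope_dirDeriv x (v + w))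
    (((hh.tendsto_slope_dirDeriv x v).comp h2).add ((hh.tendsto_slope_dirDeriv x w).comp h2)) ?_
  filter_upwards [self_mem_nhdsWithin] with t (ht : 0 < t)
  -- midpoint convexity: `x + t (v + w)` is the midpoint of `x + 2t v` and `x + 2t w`
  have hmid := hh.2 (mem_univ (x + (2 * t) • v)) (mem_univ (x + (2 * t) • w))
    (by norm_num : (0 : ℝ) ≤ 1 / 2) (by norm_num : (0 : ℝ) ≤ 1 / 2) (by norm_num)
  have hpt : (1 / 2 : ℝ) • (x + (2 * t) • v) + (1 / 2 : ℝ) • (x + (2 * t) • w) =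
      x + t • (v + w) := by
    module
  rw [hpt, smul_eq_mul, smul_eq_mul] at hmid
  simp only [Function.comp_apply, slope_line_apply, ← add_div]
  rw [div_le_div_iff₀ ht (by positivity)]
  nlinarith

theorem ConvexOn.exists_linearMap_extension_le (hh : ConvexOn ℝ univ h) (x : E)
    (T : Submodule ℝ E) (ℓ : T →ₗ[ℝ] ℝ) (hℓ : ∀ w : T, h x + ℓ w ≤ h (x + w)) :
    ∃ Λ : E →ₗ[ℝ] ℝ, (∀ w : T, Λ w = ℓ w) ∧ ∀ z, h x + Λ (z - x) ≤ h z := by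
  obtain ⟨Λ, hΛℓ, hΛ⟩ := exists_extension_of_le_sublinear ⟨T, ℓ⟩ (dirDeriv h x)
    (fun c hc v => hh.dirDeriv_smul x v hc) (hh.dirDeriv_add_le x)
    fun w => le_dirDeriv fun t ht => by simpa using hℓ (t • w)
  exact ⟨Λ, hΛℓ, fun z => by linarith [hΛ (z - x), hh.dirDeriv_sub_le x z]⟩

end DirectionalDerivative

section Stiefel

variable {n r : ℕ}

local notation "Mat" => Matrix (Fin n) (Fin r) ℝ

lemma tinner_eq_sum (A B : Mat) : tinner A B = ∑ i, ∑ j, A i j * B i j := by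
  rw [tinner, ← vec_dotProduct_vec, dotProduct, Fintype.sum_prod_type, Finset.sum_comm]
  rfl

lemma tinner_comm (A B : Mat) : tinner A B = tinner B A := by
  simp only [tinner_eq_sum, mul_comm]

lemma tinner_add_left (A B C : Mat) : tinner (A + B) C = tinner A C + tinner B C := by
  simp [tinner, Matrix.add_mul]

lemma tinner_add_right (A B C : Mat) : tinner A (B + C) = tinner A B + tinner A C := by
  simp [tinner, Matrix.mul_add]

lemma tinner_sub_left (A B C : Mat) : tinner (A - B) C = tinner A C - tinner B C := by
  simp [tinner, Matrix.sub_mul]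

lemma tinner_smul_left (c : ℝ) (A B : Mat) : tinner (c • A) B = c * tinner A B := by
  simp [tinner]

lemma tinner_smul_right (c : ℝ) (A B : Mat) : tinner A (c • B) = c * tinner A B := by
  simp [tinner]

lemma tinner_self (A : Mat) : tinner A A = ‖A‖ ^ 2 := by
  rw [frobenius_norm_def, ← Real.rpow_natCast, ← Real.rpow_mul (by positivity)]
  norm_num [tinner_eq_sum, sq]

lemma continuous_tinner : Continuous fun p : Mat × Mat => tinner p.1 p.2 := by
  unfold tinner; fun_prop

lemma continuous_projT (Z : Mat) : Continuous fun X : Mat => projT X Z := by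
  unfold projT; fun_prop

def tangentSubmodule (X : Mat) : Submodule ℝ Mat where
  carrier := {V | IsTangent X V}
  add_mem' {U W} hU hW := by
    simp only [mem_ofPred_eq, IsTangent] at *
    rw [transpose_add, Matrix.add_mul, Matrix.mul_add, add_add_add_comm, hU, hW, add_zero]
  zero_mem' := by simp [IsTangent]
  smul_mem' c U hU := by
    simp only [mem_ofPred_eq, IsTangent] at *
    rw [transpose_smul, Matrix.smul_mul, Matrix.mul_smul, ← smul_add, hU, smul_zero]

lemma isTangent_projT {X : Mat} (hX : Xᵀ * X = 1) (Z : Mat) : IsTangent X (projT X Z) := by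
  have hS : (Xᵀ * Z + Zᵀ * X)ᵀ = Xᵀ * Z + Zᵀ * X := by
    rw [transpose_add, transpose_mul, transpose_mul, transpose_transpose, transpose_transpose,
      add_comm]
  unfold IsTangent projT
  rw [transpose_sub, transpose_smul, transpose_mul, hS, Matrix.sub_mul, Matrix.mul_sub,
    Matrix.smul_mul, Matrix.mul_smul, Matrix.mul_assoc, hX, Matrix.mul_one, ← Matrix.mul_assoc, hX,
    Matrix.one_mul]
  module

lemma projT_eq_self {X W : Mat} (hW : IsTangent X W) : projT X W = W := by
  rw [projT, add_comm, hW, Matrix.mul_zero, smul_zero, sub_zero]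

lemma tinner_sub_projT (X Z : Mat) {U : Mat} (hU : IsTangent X U) :
    tinner (Z - projT X Z) U = 0 := by
  set S := (1 / 2 : ℝ) • (Xᵀ * Z + Zᵀ * X)
  have hS : Sᵀ = S := by simp [S, transpose_add, transpose_mul, add_comm]
  have hK : (Xᵀ * U)ᵀ = -(Xᵀ * U) := by
    rw [transpose_mul, transpose_transpose]
    exact eq_neg_of_add_eq_zero_left hU
  -- the trace of a symmetric times a skew-symmetric matrix vanishes
  have htr : (S * (Xᵀ * U)).trace = -(S * (Xᵀ * U)).trace := by
    conv_lhs => rw [← trace_transpose, transpose_mul, hK, hS, Matrix.neg_mul, trace_neg,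
      trace_mul_comm]
  rw [projT, sub_sub_cancel, ← Matrix.mul_smul, tinner, transpose_mul, hS, Matrix.mul_assoc]
  linarith

lemma projT_eq_zero_of_forall_tinner {X Z : Mat} (hX : Xᵀ * X = 1)
    (hZ : ∀ U, IsTangent X U → tinner Z U = 0) : projT X Z = 0 := by
  have hP := isTangent_projT hX Z
  have hPP : tinner (projT X Z) (projT X Z) = 0 := by
    have := tinner_sub_projT X Z hP
    rw [tinner_sub_left, hZ _ hP] at this
    linarith
  rw [tinner_self, sq_eq_zero_iff, norm_eq_zero] at hPP
  exact hPP

def stiefel (n r : ℕ) : Set (Matrix (Fin n) (Fin r) ℝ) := {X | Xᵀ * X = 1}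

lemma norm_of_mem_stiefel {X : Mat} (hX : X ∈ stiefel n r) : ‖X‖ = √r := by
  rw [← Real.sqrt_sq (norm_nonneg X), ← tinner_self, tinner, hX, trace_one, Fintype.card_fin]

lemma isClosed_stiefel : IsClosed (stiefel n r) :=
  isClosed_eq (by fun_prop) continuous_const

lemma isCompact_stiefel : IsCompact (stiefel n r) :=
  Metric.isCompact_of_isClosed_isBounded isClosed_stiefel
    ((Metric.isBounded_closedBall (x := 0) (r := √r)).subset fun X hX => by
      rw [Metric.mem_closedBall, dist_zero_right, norm_of_mem_stiefel hX])

lemma exists_tinner_eq (Λ : Mat →ₗ[ℝ] ℝ) : ∃ ξ : Mat, ∀ Z, tinner ξ Z = Λ Z := by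
  refine ⟨of fun i j => Λ (single i j 1), fun Z => ?_⟩
  conv_rhs => rw [matrix_eq_sum_single Z]
  simp only [tinner_eq_sum, map_sum, of_apply]
  refine Finset.sum_congr rfl fun i _ => Finset.sum_congr rfl fun j _ => ?_
  rw [mul_comm, ← smul_eq_mul, ← map_smul, smul_single, smul_eq_mul, mul_one]

theorem exists_subgradient_projT_eq_zero {h : Mat → ℝ} (hh : ConvexOn ℝ univ h) {X G : Mat}
    (hX : Xᵀ * X = 1) (hG : ∀ W, IsTangent X W → h X ≤ h (X + W) + tinner G W) :
    ∃ ξ, (∀ Z, h X + tinner ξ (Z - X) ≤ h Z) ∧ projT X (G + ξ) = 0 := by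
  let ℓ : tangentSubmodule X →ₗ[ℝ] ℝ :=
    { toFun := fun W => -tinner G W
      map_add' := fun U W => by simp only [Submodule.coe_add, tinner_add_right]; ring
      map_smul' := fun c W => by simp [tinner_smul_right] }
  obtain ⟨Λ, hΛℓ, hΛ⟩ := hh.exists_linearMap_extension_le X _ ℓ fun W => by
    have := hG W W.2
    simp only [ℓ, LinearMap.coe_mk, AddHom.coe_mk]
    linarith
  obtain ⟨ξ, hξ⟩ := exists_tinner_eq Λ
  refine ⟨ξ, fun Z => hξ (Z - X) ▸ hΛ Z, projT_eq_zero_of_forall_tinner hX fun U hU => ?_⟩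
  rw [tinner_add_left, hξ, hΛℓ ⟨U, hU⟩]
  simp [ℓ]

lemma tinner_add_smul_apply {B : Mat →ₗ[ℝ] Mat} (hB : ∀ U W, tinner U (B W) = tinner (B U) W)
    (v d : Mat) (t : ℝ) :
    tinner (v + t • d) (B (v + t • d)) =
      tinner v (B v) + 2 * t * tinner (B v) d + t ^ 2 * tinner d (B d) := by
  simp only [map_add, map_smul, tinner_add_left, tinner_add_right, tinner_smul_left,
    tinner_smul_right]
  rw [hB v d, tinner_comm d (B v)]
  ring

lemma sq_tinner_apply_le {B : Mat →ₗ[ℝ] Mat} (hB : ∀ U W, tinner U (B W) = tinner (B U) W)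
    {T : Submodule ℝ Mat} (hpos : ∀ w ∈ T, 0 ≤ tinner w (B w)) {u w : Mat} (hu : u ∈ T)
    (hw : w ∈ T) :
    tinner (B u) w ^ 2 ≤ tinner u (B u) * tinner w (B w) := by
  have hq (t : ℝ) : 0 ≤ tinner w (B w) * (t * t) + 2 * tinner (B u) w * t + tinner u (B u) := by
    have := hpos _ (T.add_mem hu (T.smul_mem t hw))
    rw [tinner_add_smul_apply hB] at this
    linarith
  have := discrim_le_zero hq
  rw [discrim] at this
  linarith

lemma norm_apply_le_of_tinner_apply_le {B : Mat →ₗ[ℝ] Mat}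
    (hB : ∀ U W, tinner U (B W) = tinner (B U) W) {T : Submodule ℝ Mat} (hBT : ∀ w ∈ T, B w ∈ T)
    (hpos : ∀ w ∈ T, 0 ≤ tinner w (B w)) {κ : ℝ}
    (hκ : ∀ w ∈ T, tinner w (B w) ≤ κ * ‖w‖ ^ 2) {v : Mat} (hv : v ∈ T) :
    ‖B v‖ ≤ κ * ‖v‖ := by
  have hκv : 0 ≤ κ * ‖v‖ := by
    rcases (norm_nonneg v).eq_or_lt with h0 | h0
    · rw [← h0, mul_zero]
    · nlinarith [hpos v hv, hκ v hv]
  have hu := hBT v hv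
  have hquartic : ‖B v‖ ^ 2 * ‖B v‖ ^ 2 ≤ (κ * ‖v‖ ^ 2) * (κ * ‖B v‖ ^ 2) :=
    calc ‖B v‖ ^ 2 * ‖B v‖ ^ 2 = tinner (B v) (B v) ^ 2 := by rw [tinner_self]; ring
      _ ≤ tinner v (B v) * tinner (B v) (B (B v)) := sq_tinner_apply_le hB hpos hv hu
      _ ≤ (κ * ‖v‖ ^ 2) * (κ * ‖B v‖ ^ 2) :=
        mul_le_mul (hκ v hv) (hκ _ hu) (hpos _ hu) ((hpos v hv).trans (hκ v hv))
  rcases (norm_nonneg (B v)).eq_or_lt with h0 | h0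
  · rwa [← h0]
  · rw [← pow_le_pow_iff_left₀ (norm_nonneg _) hκv two_ne_zero]
    nlinarith

-- the subproblem objective `φ_k` of (ii), with `G = ∇f(X_k)`, `B = B_k`, `X = X_k`
noncomputable def quadModel (G : Mat) (B : Mat →ₗ[ℝ] Mat) (h : Mat → ℝ) (X W : Mat) : ℝ :=
  tinner G W + 1 / 2 * tinner W (B W) + h (X + W)

lemma IsMinOn.quadModel_optimality {G X V : Mat} {B : Mat →ₗ[ℝ] Mat} {h : Mat → ℝ}
    {T : Submodule ℝ Mat} (hB : ∀ U W, tinner U (B W) = tinner (B U) W) (hh : ConvexOn ℝ univ h)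
    (hV : V ∈ T)
    (hmin : IsMinOn (quadModel G B h X) T V) {W : Mat} (hW : W ∈ T) :
    0 ≤ tinner (G + B V) (W - V) + (h (X + W) - h (X + V)) := by
  set a := tinner (G + B V) (W - V) + (h (X + W) - h (X + V)) with ha
  set q := tinner (W - V) (B (W - V)) with hq
  -- `V + t (W - V)` competes with `V`; divide the resulting inequality by `t` and let `t → 0⁺`
  have key : ∀ t ∈ Ioc (0 : ℝ) 1, 0 ≤ a + t / 2 * q := by
    rintro t ⟨ht0, ht1⟩
    have hmin_t := isMinOn_iff.1 hmin _ (T.add_mem hV (T.smul_mem t (T.sub_mem hW hV)))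
    have hconv_t := hh.2 (mem_univ (X + V)) (mem_univ (X + W)) (sub_nonneg.2 ht1) ht0.le
      (sub_add_cancel 1 t)
    rw [show (1 - t) • (X + V) + t • (X + W) = X + (V + t • (W - V)) by module] at hconv_t
    simp only [quadModel, tinner_add_smul_apply hB, tinner_add_right, tinner_smul_right,
      smul_eq_mul] at hmin_t hconv_t
    have : 0 ≤ t * (a + t / 2 * q) := by
      rw [ha, hq, tinner_add_left]
      linarith
    exact (mul_nonneg_iff_of_pos_left ht0).1 this
  have hlim : Tendsto (fun t : ℝ => a + t / 2 * q) (𝓝[>] 0) (𝓝 a) := by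
    have hc : Continuous fun t : ℝ => a + t / 2 * q := by fun_prop
    simpa using (hc.tendsto 0).mono_left nhdsWithin_le_nhds
  exact ge_of_tendsto hlim (eventually_of_mem (Ioc_mem_nhdsGT one_pos) key)

lemma le_add_tinner_of_tendsto {h : Mat → ℝ} (hh : Continuous h) {X V G : ℕ → Mat} {Xs Gs : Mat}
    (hXSt : ∀ k, (X k)ᵀ * X k = 1) (hX : Tendsto X atTop (𝓝 Xs)) (hV : Tendsto V atTop (𝓝 0))
    (hG : Tendsto G atTop (𝓝 Gs))
    (hvar : ∀ k W, IsTangent (X k) W → 0 ≤ tinner (G k) (W - V k) + (h (X k + W) - h (X k + V k)))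
    {W : Mat} (hW : IsTangent Xs W) : h Xs ≤ h (Xs + W) + tinner Gs W := by
  have hWk : Tendsto (fun k => projT (X k) W) atTop (𝓝 W) := by
    have := ((continuous_projT W).tendsto Xs).comp hX
    rwa [projT_eq_self hW] at this
  have hlim := ((continuous_tinner.tendsto _).comp (hG.prodMk_nhds (hWk.sub hV))).add
    (((hh.tendsto _).comp (hX.add hWk)).sub ((hh.tendsto _).comp (hX.add hV)))
  have := ge_of_tendsto hlim (.of_forall fun k => hvar k _ (isTangent_projT (hXSt k) W))
  simp only [sub_zero, add_zero] at this
  linarith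

end Stiefel

theorem stmt10_general {n r : ℕ} (f h : Matrix (Fin n) (Fin r) ℝ → ℝ)
    -- `f` is continuously differentiable with gradient function `g = ∇f`, which is `L`-Lipschitz
    (g : Matrix (Fin n) (Fin r) ℝ → Matrix (Fin n) (Fin r) ℝ)
    (Lf : Matrix (Fin n) (Fin r) ℝ → (Matrix (Fin n) (Fin r) ℝ →L[ℝ] ℝ))
    (hf : ∀ Z, HasFDerivAt f (Lf Z) Z)
    (L κ₁ κ₂ σ c₀ M₁ : ℝ) (m : ℕ)
    (hLipg : ∀ A B, ‖g A - g B‖ ≤ L * ‖A - B‖)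
    -- `h` is convex and `L_h`-Lipschitz
    (hconv : ConvexOn ℝ Set.univ h)
    (hκ₁ : 0 < κ₁) (hσ : σ ∈ Set.Ioo (0 : ℝ) 1)
    (hc₀ : 0 < c₀) (hM₁ : 0 < M₁)
    -- the sequences
    (X V : ℕ → Matrix (Fin n) (Fin r) ℝ) (α : ℕ → ℝ)
    (B : ℕ → (Matrix (Fin n) (Fin r) ℝ →ₗ[ℝ] Matrix (Fin n) (Fin r) ℝ))
    (hXSt : ∀ k, (X k)ᵀ * X k = 1)
    (hVt : ∀ k, IsTangent (X k) (V k))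
    (hα : ∀ k, α k ∈ Set.Icc c₀ 1)
    -- each `B_k` is self-adjoint and maps `T_{X_k}` into itself
    (hBsa : ∀ k U W, tinner U (B k W) = tinner (B k U) W)
    (hBtan : ∀ k W, IsTangent (X k) W → IsTangent (X k) (B k W))
    -- (i) uniform bounds on the quadratic form of `B_k` over `T_{X_k}`
    (hBbound : ∀ k W, IsTangent (X k) W →
      κ₁ * ‖W‖ ^ 2 ≤ tinner W (B k W) ∧ tinner W (B k W) ≤ κ₂ * ‖W‖ ^ 2)
    -- (ii) `V_k` minimizes `φ_k` over `T_{X_k}`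
    (hmin : ∀ k W, IsTangent (X k) W →
      tinner (g (X k)) (V k) + (1 / 2) * tinner (V k) (B k (V k)) + h (X k + V k) ≤
        tinner (g (X k)) W + (1 / 2) * tinner W (B k W) + h (X k + W))
    -- (iii)
    (hstep : ∀ k, ‖X (k + 1) - X k‖ ≤ M₁ * α k * ‖V k‖)
    -- (iv) nonmonotone sufficient decrease
    (hdec : ∀ k, f (X (k + 1)) + h (X (k + 1)) ≤
      (Finset.Icc (k - m) k).sup' (Finset.nonempty_Icc.mpr (Nat.sub_le k m))
          (fun j => f (X j) + h (X j))
        - σ / 2 * α k * tinner (V k) (B k (V k))) :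
    -- every accumulation point of `(X_k)` is a stationary point
    ∀ Xs : Matrix (Fin n) (Fin r) ℝ,
      (∃ φ : ℕ → ℕ, StrictMono φ ∧ Tendsto (fun i => X (φ i)) atTop (nhds Xs)) →
      ∃ ξ, (∀ Z, h Xs + tinner ξ (Z - Xs) ≤ h Z) ∧ projT Xs (g Xs + ξ) = 0 := by
  rintro Xs ⟨φ, hφ, hXφ⟩
  have hhc : Continuous h := continuousOn_univ.1 (hconv.continuousOn isOpen_univ)
  have hgc : Continuous g := (LipschitzWith.of_dist_le' (K := L) fun A B => by
    simpa only [dist_eq_norm] using hLipg A B).continuous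
  have hfc : Continuous f := continuous_iff_continuousAt.2 fun Z => (hf Z).continuousAt
  have hBpos k : ∀ W ∈ tangentSubmodule (X k), 0 ≤ tinner W (B k W) := fun W hW =>
    (by positivity : 0 ≤ κ₁ * ‖W‖ ^ 2).trans (hBbound k W hW).1
  have hsuff k : σ / 2 * c₀ * κ₁ * ‖V k‖ ^ 2 ≤ σ / 2 * α k * tinner (V k) (B k (V k)) := by
    have hσ2 : 0 < σ / 2 := half_pos hσ.1
    rw [mul_assoc]
    exact mul_le_mul (by gcongr; exact (hα k).1) (hBbound k (V k) (hVt k)).1 (by positivity)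
      (mul_pos hσ2 (hc₀.trans_le (hα k).1)).le
  have hstep' k : dist (X (k + 1)) (X k) ≤ M₁ * ‖V k‖ :=
    (dist_eq_norm _ _).trans_le <| (hstep k).trans <| (mul_right_comm _ _ _).trans_le <|
      mul_le_of_le_one_right (by positivity) (hα k).2
  have hV : Tendsto V atTop (𝓝 0) :=
    tendsto_zero_of_nonmonotone_descent (F := fun Y => f Y + h Y) isCompact_stiefel
      (hfc.add hhc).continuousOn hXSt (by have := hσ.1; positivity)
      (fun k => (hdec k).trans (sub_le_sub_left (hsuff k) _)) hstep'
  have hBV : Tendsto (fun k => B k (V k)) atTop (𝓝 0) :=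
    squeeze_zero_norm (fun k => norm_apply_le_of_tinner_apply_le (hBsa k) (hBtan k) (hBpos k)
      (fun W hW => (hBbound k W hW).2) (hVt k)) (by simpa using hV.norm.const_mul κ₂)
  have hXs : Xsᵀ * Xs = 1 := isClosed_stiefel.mem_of_tendsto hXφ (.of_forall fun k => hXSt _)
  refine exists_subgradient_projT_eq_zero hconv hXs fun W hW =>
    le_add_tinner_of_tendsto hhc (fun k => hXSt _) hXφ (hV.comp hφ.tendsto_atTop)
      (by simpa using ((hgc.tendsto Xs).comp hXφ).add (hBV.comp hφ.tendsto_atTop))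
      (fun k W' hW' => ?_) hW
  exact IsMinOn.quadModel_optimality (T := tangentSubmodule _) (hBsa _) hconv (hVt _)
    (isMinOn_iff.2 (hmin _)) hW'

theorem stmt10 {n r : ℕ} (f h : Matrix (Fin n) (Fin r) ℝ → ℝ)
    -- `f` is continuously differentiable with gradient function `g = ∇f`, which is `L`-Lipschitz
    (g : Matrix (Fin n) (Fin r) ℝ → Matrix (Fin n) (Fin r) ℝ)
    (Lf : Matrix (Fin n) (Fin r) ℝ → (Matrix (Fin n) (Fin r) ℝ →L[ℝ] ℝ))
    (hf : ∀ Z, HasFDerivAt f (Lf Z) Z) (hGrad : ∀ Z V, Lf Z V = tinner (g Z) V)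
    (L Lh κ₁ κ₂ σ c₀ M₁ : ℝ) (m : ℕ)
    (hLipg : ∀ A B, ‖g A - g B‖ ≤ L * ‖A - B‖)
    -- `h` is convex and `L_h`-Lipschitz
    (hconv : ConvexOn ℝ Set.univ h)
    (hLiph : ∀ A B, |h A - h B| ≤ Lh * ‖A - B‖)
    (hκ₁ : 0 < κ₁) (hκ₁₂ : κ₁ ≤ κ₂) (hσ : σ ∈ Set.Ioo (0 : ℝ) 1)
    (hc₀ : 0 < c₀) (hM₁ : 0 < M₁)
    -- the sequences
    (X V : ℕ → Matrix (Fin n) (Fin r) ℝ) (α : ℕ → ℝ)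
    (B : ℕ → (Matrix (Fin n) (Fin r) ℝ →ₗ[ℝ] Matrix (Fin n) (Fin r) ℝ))
    (hXSt : ∀ k, (X k)ᵀ * X k = 1)
    (hVt : ∀ k, IsTangent (X k) (V k))
    (hα : ∀ k, α k ∈ Set.Icc c₀ 1)
    -- each `B_k` is self-adjoint and maps `T_{X_k}` into itself
    (hBsa : ∀ k U W, tinner U (B k W) = tinner (B k U) W)
    (hBtan : ∀ k W, IsTangent (X k) W → IsTangent (X k) (B k W))
    -- (i) uniform bounds on the quadratic form of `B_k` over `T_{X_k}`
    (hBbound : ∀ k W, IsTangent (X k) W →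
      κ₁ * ‖W‖ ^ 2 ≤ tinner W (B k W) ∧ tinner W (B k W) ≤ κ₂ * ‖W‖ ^ 2)
    -- (ii) `V_k` minimizes `φ_k` over `T_{X_k}`
    (hmin : ∀ k W, IsTangent (X k) W →
      tinner (g (X k)) (V k) + (1 / 2) * tinner (V k) (B k (V k)) + h (X k + V k) ≤
        tinner (g (X k)) W + (1 / 2) * tinner W (B k W) + h (X k + W))
    -- (iii)
    (hstep : ∀ k, ‖X (k + 1) - X k‖ ≤ M₁ * α k * ‖V k‖)
    -- (iv) nonmonotone sufficient decrease
    (hdec : ∀ k, f (X (k + 1)) + h (X (k + 1)) ≤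
      (Finset.Icc (k - m) k).sup' (Finset.nonempty_Icc.mpr (Nat.sub_le k m))
          (fun j => f (X j) + h (X j))
        - σ / 2 * α k * tinner (V k) (B k (V k))) :
    -- every accumulation point of `(X_k)` is a stationary point
    ∀ Xs : Matrix (Fin n) (Fin r) ℝ,
      (∃ φ : ℕ → ℕ, StrictMono φ ∧ Tendsto (fun i => X (φ i)) atTop (nhds Xs)) →
      ∃ ξ, (∀ Z, h Xs + tinner ξ (Z - Xs) ≤ h Z) ∧ projT Xs (g Xs + ξ) = 0 :=
  stmt10_general f h g Lf hf L κ₁ κ₂ σ c₀ M₁ m hLipg hconv hκ₁ hσ hc₀ hM₁ X V α B hXSt hVt hα hBsa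
    hBtan hBbound hmin hstep hdec
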